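/- Let p be a permutation of length n written as p = LnR, where n is the maximum entry and L and R are both nonempty. Then s(p) = s(L)s(R)n avoids both 231 and 312 if and only if s(L) and s(R) both avoid 231 and 312 (so each is layered) and one of the following holds: (1) every entry of L is less than every entry of R, or (2) every entry of the last layer of s(L) is greater than every entry of the first layer of s(R), every entry of L not in the last layer of s(L) is less than every entry of R, and every entry of R not in the first layer of s(R) is greater than every entry of L. -/

import Mathlib

/-- The stack-sorting map `s`, implemented with a fuel parameter (the fuel
`l.length` always suffices, since the maximum of a nonempty list of naturals is
attained, so both recursive calls are on strictly shorter lists).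
`s(ε) = ε` and `s(LmR) = s(L) s(R) m` where `m` is the maximum entry. -/
def stackSortAux : ℕ → List ℕ → List ℕ
  | 0, _ => []
  | _ + 1, [] => []
  | fuel + 1, a :: t =>
      let m := (a :: t).foldr max 0
      stackSortAux fuel ((a :: t).takeWhile (fun x => x ≠ m)) ++
        stackSortAux fuel (((a :: t).dropWhile (fun x => x ≠ m)).tail) ++ [m]

/-- The stack-sorting map on finite sequences of (distinct) naturals. -/
def stackSort (l : List ℕ) : List ℕ := stackSortAux l.length l

/-- `l` is a permutation of `{1, 2, …, n}`, written in one-line notation. -/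
def IsPermList (n : ℕ) (l : List ℕ) : Prop :=
  l.Perm ((List.range n).map (· + 1))

/-- The sequence `p` contains the pattern `q`: there is a strictly increasing choice
of positions of `p` on which the entries compare exactly as the entries of `q` do. -/
def ContainsPat (p q : List ℕ) : Prop :=
  ∃ f : Fin q.length → Fin p.length, StrictMono f ∧
    ∀ i j : Fin q.length, q.get i < q.get j ↔ p.get (f i) < p.get (f j)

/-- The sequence `p` avoids the pattern `q`. -/
def AvoidsPat (p q : List ℕ) : Prop := ¬ ContainsPat p q

/-- A sequence is layered if it is a concatenation of (nonempty) strictly decreasing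
blocks (the layers) such that every entry of each layer is smaller than every entry
of every later layer. -/
def IsLayered (p : List ℕ) : Prop :=
  ∃ blocks : List (List ℕ),
    p = blocks.flatten ∧
    (∀ blk ∈ blocks, blk ≠ [] ∧ blk.Pairwise (· > ·)) ∧
    blocks.Pairwise (fun b c => ∀ x ∈ b, ∀ y ∈ c, x < y)

/-- Length of the maximal strictly decreasing prefix of a list. -/
def decRunLen : List ℕ → ℕ
  | [] => 0
  | [_] => 1
  | a :: b :: t => if b < a then decRunLen (b :: t) + 1 else 1

/-- Length of the maximal strictly increasing prefix of a list. -/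
def incRunLen : List ℕ → ℕ
  | [] => 0
  | [_] => 1
  | a :: b :: t => if a < b then incRunLen (b :: t) + 1 else 1

/-- The first layer of a (layered) sequence: its maximal strictly decreasing prefix. -/
def firstLayer (q : List ℕ) : List ℕ := q.take (decRunLen q)

/-- The last layer of a (layered) sequence: its maximal strictly decreasing suffix. -/
def lastLayer (q : List ℕ) : List ℕ := (q.reverse.take (incRunLen q.reverse)).reverse

/-!
For sequences of distinct entries, avoiding 231 and 312 says exactly that whenever `x` precedes
`z` and `z < x`, every entry between them lies strictly between them in value. In particular such
a sequence whose last entry is below its first is decreasing, so the last layer of `A ++ [a]` is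
the set of its entries `≥ a` and the first layer of `b :: B` the set of its entries `≤ b`.

If `A ++ B` avoids both patterns and has an inversion across the boundary, betweenness pushes
the inversion onto the boundary pair, `b < a`, and then sorts every other entry of `A` (resp. `B`)
below `b` or above `a`, which is condition (2). Conversely, an occurrence of 231 or 312 across the
boundary would, under (1) or (2), put a larger entry of a layer after a smaller one. The maximum
`n`, written last by the stack-sorting map, is irrelevant to both patterns.
-/

open List

theorem foldr_max_mem {l : List ℕ} (h : l ≠ []) : l.foldr max 0 ∈ l :=
  maximum_mem (foldr_max_of_ne_nil h).symm

theorem foldr_max_eq_of_mem {l : List ℕ} {m : ℕ} (hm : m ∈ l) (h : ∀ x ∈ l, x ≤ m) :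
    l.foldr max 0 = m :=
  le_antisymm (max_le_of_forall_le l m h) (le_max_of_le hm le_rfl)

theorem takeWhile_ne_append_cons {s t : List ℕ} {m : ℕ} (h : m ∉ s) :
    (s ++ m :: t).takeWhile (fun x => x ≠ m) = s := by
  rw [takeWhile_append_of_pos fun x hx => by simpa using ne_of_mem_of_not_mem hx h]
  simp

theorem dropWhile_ne_append_cons {s t : List ℕ} {m : ℕ} (h : m ∉ s) :
    (s ++ m :: t).dropWhile (fun x => x ≠ m) = m :: t := by
  rw [dropWhile_append_of_pos fun x hx => by simpa using ne_of_mem_of_not_mem hx h]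
  simp

theorem takeWhile_ne_append_cons_tail_dropWhile {l : List ℕ} {m : ℕ} (h : m ∈ l) :
    l.takeWhile (fun x => x ≠ m) ++ m :: (l.dropWhile (fun x => x ≠ m)).tail = l := by
  obtain ⟨s, t, rfl, hm⟩ := eq_append_cons_of_mem h
  rw [takeWhile_ne_append_cons hm, dropWhile_ne_append_cons hm, tail_cons]

theorem length_takeWhile_ne_add_length_tail_dropWhile {l : List ℕ} {m : ℕ} (h : m ∈ l) :
    (l.takeWhile (fun x => x ≠ m)).length + ((l.dropWhile (fun x => x ≠ m)).tail).length + 1 =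
      l.length := by
  conv_rhs => rw [← takeWhile_ne_append_cons_tail_dropWhile h]
  simp only [length_append, length_cons]
  omega

theorem stackSortAux_succ {l : List ℕ} (hl : l ≠ []) (f : ℕ) :
    stackSortAux (f + 1) l =
      stackSortAux f (l.takeWhile (fun x => x ≠ l.foldr max 0)) ++
        stackSortAux f ((l.dropWhile (fun x => x ≠ l.foldr max 0)).tail) ++ [l.foldr max 0] := by
  cases l with
  | nil => exact absurd rfl hl
  | cons => rfl

theorem stackSortAux_eq_of_length_le {l : List ℕ} {f g : ℕ} (hf : l.length ≤ f)
    (hg : l.length ≤ g) : stackSortAux f l = stackSortAux g l := by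
  induction f generalizing l g with
  | zero => rw [length_eq_zero_iff.1 (Nat.le_zero.1 hf)]; cases g <;> rfl
  | succ f ih =>
    rcases eq_or_ne l [] with rfl | hl
    · cases g <;> rfl
    obtain ⟨g, rfl⟩ := Nat.exists_eq_succ_of_ne_zero (by grind [length_pos_iff] : g ≠ 0)
    have hlen := length_takeWhile_ne_add_length_tail_dropWhile (foldr_max_mem hl)
    rw [stackSortAux_succ hl, stackSortAux_succ hl]
    set s := l.takeWhile _
    set t := (l.dropWhile _).tail
    rw [ih (l := s) (g := g) (by omega) (by omega), ih (l := t) (g := g) (by omega) (by omega)]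

theorem stackSort_eq_of_ne_nil {l : List ℕ} (hl : l ≠ []) :
    stackSort l =
      stackSort (l.takeWhile (fun x => x ≠ l.foldr max 0)) ++
        stackSort ((l.dropWhile (fun x => x ≠ l.foldr max 0)).tail) ++ [l.foldr max 0] := by
  obtain ⟨f, hf⟩ := Nat.exists_eq_succ_of_ne_zero (length_pos_iff.2 hl).ne'
  have hlen := length_takeWhile_ne_add_length_tail_dropWhile (foldr_max_mem hl)
  rw [stackSort, hf, stackSortAux_succ hl, stackSort, stackSort,
    stackSortAux_eq_of_length_le (g := (l.takeWhile _).length) (by omega) le_rfl,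
    stackSortAux_eq_of_length_le (g := ((l.dropWhile _).tail).length) (by omega) le_rfl]

theorem stackSort_perm (l : List ℕ) : stackSort l ~ l := by
  induction h : l.length using Nat.strong_induction_on generalizing l with
  | _ n ih =>
    rcases eq_or_ne l [] with rfl | hl
    · rfl
    have hm := foldr_max_mem hl
    have hlen := length_takeWhile_ne_add_length_tail_dropWhile hm
    rw [stackSort_eq_of_ne_nil hl]
    refine (((ih _ (by omega) _ rfl).append (ih _ (by omega) _ rfl)).append_right _).trans ?_
    conv_rhs => rw [← takeWhile_ne_append_cons_tail_dropWhile hm]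
    rw [append_assoc]
    exact (perm_append_singleton _ _).append_left _

theorem stackSort_append_cons {s t : List ℕ} {m : ℕ} (hs : ∀ x ∈ s, x < m)
    (ht : ∀ x ∈ t, x ≤ m) : stackSort (s ++ m :: t) = stackSort s ++ stackSort t ++ [m] := by
  have hm : m ∉ s := fun h => (hs m h).false
  have hmax : (s ++ m :: t).foldr max 0 = m :=
    foldr_max_eq_of_mem (by simp) (by grind)
  rw [stackSort_eq_of_ne_nil (by simp), hmax, takeWhile_ne_append_cons hm,
    dropWhile_ne_append_cons hm, tail_cons]
theorem containsPat_three_iff {p : List ℕ} {a b c : ℕ} :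
    ContainsPat p [a, b, c] ↔ ∃ x y z, [x, y, z] <+ p ∧
      ∀ i j : Fin 3, [a, b, c][i] < [a, b, c][j] ↔ [x, y, z][i] < [x, y, z][j] := by
  constructor
  · rintro ⟨f, hf, hpat⟩
    refine ⟨p.get (f 0), p.get (f 1), p.get (f 2), ?_,
      fun i j => by fin_cases i <;> fin_cases j <;> exact hpat _ _⟩
    exact List.sublist_iff_exists_fin_orderEmbedding_get_eq.2
      ⟨OrderEmbedding.ofStrictMono f hf, fun i => by fin_cases i <;> rfl⟩
  · rintro ⟨x, y, z, hs, hpat⟩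
    obtain ⟨f, hf⟩ := List.sublist_iff_exists_fin_orderEmbedding_get_eq.1 hs
    refine ⟨f, f.strictMono, fun i j => ?_⟩
    rw [← hf i, ← hf j]
    exact hpat i j

theorem containsPat_231_iff {p : List ℕ} :
    ContainsPat p [2, 3, 1] ↔ ∃ x y z, [x, y, z] <+ p ∧ z < x ∧ x < y := by
  rw [containsPat_three_iff]
  refine exists₃_congr fun x y z => and_congr_right fun _ => ⟨fun h => ?_, fun h i j => ?_⟩
  · exact ⟨(h 2 0).1 (by decide), (h 0 1).1 (by decide)⟩
  · fin_cases i <;> fin_cases j <;> simp <;> omega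

theorem containsPat_312_iff {p : List ℕ} :
    ContainsPat p [3, 1, 2] ↔ ∃ x y z, [x, y, z] <+ p ∧ y < z ∧ z < x := by
  rw [containsPat_three_iff]
  refine exists₃_congr fun x y z => and_congr_right fun _ => ⟨fun h => ?_, fun h i j => ?_⟩
  · exact ⟨(h 1 2).1 (by decide), (h 2 0).1 (by decide)⟩
  · fin_cases i <;> fin_cases j <;> simp <;> omega

def Avoids231And312 (p : List ℕ) : Prop :=
  ∀ x y z, [x, y, z] <+ p → ¬(z < x ∧ x < y) ∧ ¬(y < z ∧ z < x)

theorem avoidsPat_231_and_312_iff {p : List ℕ} :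
    AvoidsPat p [2, 3, 1] ∧ AvoidsPat p [3, 1, 2] ↔ Avoids231And312 p := by
  simp only [AvoidsPat, containsPat_231_iff, containsPat_312_iff, Avoids231And312]
  grind

theorem Avoids231And312.sublist {l₁ l₂ : List ℕ} (h : Avoids231And312 l₂) (hs : l₁ <+ l₂) :
    Avoids231And312 l₁ :=
  fun x y z hxyz => h x y z (hxyz.trans hs)

theorem Avoids231And312.between {l : List ℕ} {x m z : ℕ} (h : Avoids231And312 l)
    (hnd : l.Nodup) (hs : [x, m, z] <+ l) (hzx : z < x) : z < m ∧ m < x := by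
  have hne := hnd.sublist hs
  simp only [nodup_cons, mem_cons, not_or, not_mem_nil] at hne
  have := h x m z hs
  omega

theorem Avoids231And312.of_between {l : List ℕ}
    (h : ∀ x m z, [x, m, z] <+ l → z < x → z < m ∧ m < x) : Avoids231And312 l := by
  intro x m z hs
  by_cases hzx : z < x
  · have := h x m z hs hzx
    omega
  · omega

theorem sublist_append_of_length_three {A B : List ℕ} {x y z : ℕ} (hs : [x, y, z] <+ A ++ B) :
    [x, y, z] <+ A ∨ ([x, y] <+ A ∧ z ∈ B) ∨ (x ∈ A ∧ [y, z] <+ B) ∨ [x, y, z] <+ B := by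
  obtain ⟨l₁, l₂, heq, h₁, h₂⟩ := sublist_append_iff.1 hs
  match l₁, l₂, heq with
  | [], _, rfl => exact .inr (.inr (.inr h₂))
  | [_], _, rfl => exact .inr (.inr (.inl ⟨singleton_sublist.1 h₁, h₂⟩))
  | [_, _], _, rfl => exact .inr (.inl ⟨h₁, singleton_sublist.1 h₂⟩)
  | [_, _, _], [], rfl => exact .inl h₁

theorem avoids231And312_append_singleton_iff {l : List ℕ} {n : ℕ} (h : ∀ x ∈ l, x < n) :
    Avoids231And312 (l ++ [n]) ↔ Avoids231And312 l := by
  refine ⟨fun hn => hn.sublist (sublist_append_left l [n]), fun hl x y z hs => ?_⟩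
  rcases sublist_append_of_length_three hs with hs | ⟨hxy, hz⟩ | ⟨_, hyz⟩ | hs
  · exact hl x y z hs
  · have := h x (hxy.subset (by simp))
    simp only [mem_singleton] at hz
    omega
  · exact absurd hyz.length_le (by simp)
  · exact absurd hs.length_le (by simp)

section ChainPrefix

variable {α : Type*} (r : α → α → Prop) [DecidableRel r]

def chainPrefixLen : List α → ℕ
  | [] => 0
  | [_] => 1
  | a :: b :: t => if r a b then chainPrefixLen (b :: t) + 1 else 1

variable {r}

theorem chainPrefixLen_cons_pos (a : α) (l : List α) : 0 < chainPrefixLen r (a :: l) := by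
  cases l with
  | nil => simp [chainPrefixLen]
  | cons b l => rw [chainPrefixLen]; split <;> omega

theorem isChain_take_chainPrefixLen : ∀ l : List α, (l.take (chainPrefixLen r l)).IsChain r
  | [] => by simp
  | [_] => by simp [chainPrefixLen]
  | a :: b :: l => by
    rw [chainPrefixLen]
    split_ifs with hab
    · obtain ⟨k, hk⟩ := Nat.exists_eq_add_one_of_ne_zero (chainPrefixLen_cons_pos (r := r) b l).ne'
      have := isChain_take_chainPrefixLen (b :: l)
      rw [hk, take_succ_cons] at this ⊢
      rw [take_succ_cons]
      exact this.cons_cons hab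
    · simp

theorem List.IsPrefix.prefix_take_chainPrefixLen :
    ∀ {s l : List α}, s <+: l → s.IsChain r → s <+: l.take (chainPrefixLen r l)
  | [], _, _, _ => nil_prefix
  | [a], l, hs, _ => by
    obtain ⟨t, rfl⟩ := hs
    obtain ⟨k, hk⟩ := Nat.exists_eq_add_one_of_ne_zero (chainPrefixLen_cons_pos (r := r) a t).ne'
    rw [singleton_append, hk, take_succ_cons]
    exact cons_prefix_cons.2 ⟨rfl, nil_prefix⟩
  | a :: b :: s, l, hs, hc => by
    obtain ⟨t, rfl⟩ := hs
    have ih := IsPrefix.prefix_take_chainPrefixLen (prefix_append (b :: s) t) hc.tail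
    simp only [cons_append, chainPrefixLen, if_pos (isChain_cons_cons.1 hc).1, take_succ_cons]
    exact cons_prefix_cons.2 ⟨rfl, ih⟩

end ChainPrefix

theorem decRunLen_eq_chainPrefixLen : ∀ l : List ℕ, decRunLen l = chainPrefixLen (· > ·) l
  | [] => rfl
  | [_] => rfl
  | a :: b :: t => by
    simp only [decRunLen, chainPrefixLen, decRunLen_eq_chainPrefixLen (b :: t)]

theorem incRunLen_eq_chainPrefixLen : ∀ l : List ℕ, incRunLen l = chainPrefixLen (· < ·) l
  | [] => rfl
  | [_] => rfl
  | a :: b :: t => by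
    simp only [incRunLen, chainPrefixLen, incRunLen_eq_chainPrefixLen (b :: t)]

theorem firstLayer_prefix (q : List ℕ) : firstLayer q <+: q :=
  take_prefix _ _

theorem lastLayer_suffix (q : List ℕ) : lastLayer q <:+ q := by
  have := reverse_suffix.2 (take_prefix (incRunLen q.reverse) q.reverse)
  rwa [reverse_reverse] at this

theorem pairwise_firstLayer (q : List ℕ) : (firstLayer q).Pairwise (· > ·) := by
  rw [firstLayer, decRunLen_eq_chainPrefixLen, ← isChain_iff_pairwise]
  exact isChain_take_chainPrefixLen q

theorem pairwise_lastLayer (q : List ℕ) : (lastLayer q).Pairwise (· > ·) := by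
  rw [lastLayer, incRunLen_eq_chainPrefixLen, pairwise_reverse, ← isChain_iff_pairwise]
  exact isChain_take_chainPrefixLen q.reverse

theorem List.IsPrefix.prefix_firstLayer {s q : List ℕ} (hs : s <+: q) (h : s.Pairwise (· > ·)) :
    s <+: firstLayer q := by
  rw [firstLayer, decRunLen_eq_chainPrefixLen]
  exact hs.prefix_take_chainPrefixLen (isChain_iff_pairwise.2 h)

theorem List.IsSuffix.suffix_lastLayer {s q : List ℕ} (hs : s <:+ q) (h : s.Pairwise (· > ·)) :
    s <:+ lastLayer q := by
  rw [lastLayer, incRunLen_eq_chainPrefixLen, ← reverse_prefix, reverse_reverse]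
  exact (reverse_prefix.2 hs).prefix_take_chainPrefixLen
    (isChain_iff_pairwise.2 (pairwise_reverse.2 h))

theorem le_of_mem_lastLayer {A : List ℕ} {a x : ℕ} (hx : x ∈ lastLayer (A ++ [a])) : a ≤ x := by
  obtain ⟨S, hS⟩ := (suffix_append A [a]).suffix_lastLayer (pairwise_singleton _ a)
  have hpw := pairwise_lastLayer (A ++ [a])
  rw [← hS, pairwise_append] at hpw
  rw [← hS, mem_append, mem_singleton] at hx
  rcases hx with hx | rfl
  · exact (hpw.2.2 x hx a (mem_singleton_self a)).le
  · exact le_rfl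

theorem le_of_mem_firstLayer {B : List ℕ} {b y : ℕ} (hy : y ∈ firstLayer (b :: B)) : y ≤ b := by
  obtain ⟨S, hS⟩ := IsPrefix.prefix_firstLayer (q := b :: B) (prefix_append [b] B)
    (pairwise_singleton _ b)
  have hpw := pairwise_firstLayer (b :: B)
  rw [← hS, singleton_append, pairwise_cons] at hpw
  rw [← hS, singleton_append, mem_cons] at hy
  rcases hy with rfl | hy
  · exact le_rfl
  · exact (hpw.1 y hy).le

theorem cons_sublist_of_suffix {α : Type*} {l S t : List α} {x : α} (hnd : l.Nodup)
    (hS : S <:+ l) (hs : x :: t <+ l) (hx : x ∈ S) : x :: t <+ S := by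
  obtain ⟨P, rfl⟩ := hS
  obtain ⟨l₁, l₂, heq, h₁, h₂⟩ := sublist_append_iff.1 hs
  cases l₁ with
  | nil => simpa [heq] using h₂
  | cons y l₁ =>
    rw [cons_append, cons.injEq] at heq
    obtain ⟨rfl, -⟩ := heq
    exact absurd hx (disjoint_of_nodup_append hnd (h₁.subset mem_cons_self))

theorem concat_sublist_of_prefix {α : Type*} {l S t : List α} {z : α} (hnd : l.Nodup)
    (hS : S <+: l) (hs : t ++ [z] <+ l) (hz : z ∈ S) : t ++ [z] <+ S := by
  have := cons_sublist_of_suffix (nodup_reverse.2 hnd) (reverse_suffix.2 hS)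
    (by simpa using hs.reverse) (mem_reverse.2 hz)
  simpa using this.reverse

theorem lt_of_sublist_of_mem_lastLayer {A : List ℕ} {x y : ℕ} (hnd : A.Nodup)
    (hs : [x, y] <+ A) (hx : x ∈ lastLayer A) : y < x ∧ y ∈ lastLayer A := by
  have hsub := cons_sublist_of_suffix hnd (lastLayer_suffix A) hs hx
  exact ⟨pairwise_iff_forall_sublist.1 (pairwise_lastLayer A) hsub, hsub.subset (by simp)⟩

theorem lt_of_sublist_of_mem_firstLayer {B : List ℕ} {y z : ℕ} (hnd : B.Nodup)
    (hs : [y, z] <+ B) (hz : z ∈ firstLayer B) : z < y ∧ y ∈ firstLayer B := by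
  have hsub := concat_sublist_of_prefix (t := [y]) hnd (firstLayer_prefix B) hs hz
  exact ⟨pairwise_iff_forall_sublist.1 (pairwise_firstLayer B) hsub, hsub.subset (by simp)⟩

theorem Avoids231And312.pairwise_of_lt {w z : ℕ} {T : List ℕ}
    (h : Avoids231And312 ((w :: T) ++ [z])) (hnd : ((w :: T) ++ [z]).Nodup) (hzw : z < w) :
    ((w :: T) ++ [z]).Pairwise (· > ·) := by
  have hz : ∀ u ∈ w :: T, z < u := by
    intro u hu
    rcases mem_cons.1 hu with rfl | hu
    · exact hzw
    · exact (h.between hnd ((cons_sublist_cons.2 (singleton_sublist.2 hu)).append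
        (Sublist.refl [z])) hzw).1
  refine pairwise_append.2 ⟨pairwise_iff_forall_sublist.2 fun {u v} huv => ?_,
    pairwise_singleton _ z, fun u hu v hv => mem_singleton.1 hv ▸ hz u hu⟩
  exact (h.between hnd (huv.append (Sublist.refl [z])) (hz u (huv.subset (by simp)))).2

theorem Avoids231And312.mem_lastLayer_iff {A : List ℕ} {a x : ℕ} (h : Avoids231And312 (A ++ [a]))
    (hnd : (A ++ [a]).Nodup) : x ∈ lastLayer (A ++ [a]) ↔ x ∈ A ++ [a] ∧ a ≤ x := by
  refine ⟨fun hx => ⟨(lastLayer_suffix _).subset hx, le_of_mem_lastLayer hx⟩, ?_⟩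
  rintro ⟨hx, hax⟩
  rcases eq_or_lt_of_le hax with rfl | hax
  · exact ((suffix_append A [a]).suffix_lastLayer (pairwise_singleton _ a)).subset
      (mem_singleton_self a)
  obtain ⟨P, T, rfl⟩ := append_of_mem ((mem_append.1 hx).resolve_right (by simpa using hax.ne'))
  have hS : (x :: T) ++ [a] <:+ P ++ x :: T ++ [a] := ⟨P, by simp⟩
  have hpw := (h.sublist hS.sublist).pairwise_of_lt (hnd.sublist hS.sublist) hax
  exact (hS.suffix_lastLayer hpw).subset (by simp)

theorem Avoids231And312.mem_firstLayer_iff {B : List ℕ} {b y : ℕ} (h : Avoids231And312 (b :: B))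
    (hnd : (b :: B).Nodup) : y ∈ firstLayer (b :: B) ↔ y ∈ b :: B ∧ y ≤ b := by
  refine ⟨fun hy => ⟨(firstLayer_prefix _).subset hy, le_of_mem_firstLayer hy⟩, ?_⟩
  rintro ⟨hy, hyb⟩
  rcases eq_or_lt_of_le hyb with rfl | hyb
  · exact (IsPrefix.prefix_firstLayer (q := y :: B) (prefix_append [y] B)
      (pairwise_singleton _ y)).subset (mem_singleton_self y)
  obtain ⟨T, U, rfl⟩ := append_of_mem ((mem_cons.1 hy).resolve_left (by omega))
  have hS : (b :: T) ++ [y] <+: b :: (T ++ y :: U) := ⟨U, by simp⟩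
  have hpw := (h.sublist hS.sublist).pairwise_of_lt (hnd.sublist hS.sublist) hyb
  exact (hS.prefix_firstLayer hpw).subset (by simp)

/-- Condition (2) of the theorem: the last layer of `A` and the first layer of `B` merge into a
single layer of `A ++ B`. -/
def LayersMerge (A B : List ℕ) : Prop :=
  (∀ x ∈ lastLayer A, ∀ y ∈ firstLayer B, y < x) ∧
  (∀ x ∈ A, x ∉ lastLayer A → ∀ y ∈ B, x < y) ∧
  (∀ y ∈ B, y ∉ firstLayer B → ∀ x ∈ A, x < y)

theorem Avoids231And312.append {A B : List ℕ} (hA : Avoids231And312 A)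
    (hB : Avoids231And312 B) (hnd : (A ++ B).Nodup)
    (hc : (∀ x ∈ A, ∀ y ∈ B, x < y) ∨ LayersMerge A B) : Avoids231And312 (A ++ B) := by
  have hndA := hnd.sublist (sublist_append_left A B)
  have hndB := hnd.sublist (sublist_append_right A B)
  have cross : ∀ {x z}, x ∈ A → z ∈ B → z < x →
      LayersMerge A B ∧ x ∈ lastLayer A ∧ z ∈ firstLayer B := fun hx hz hzx => by
    obtain ⟨c1, c2, c3⟩ := hc.resolve_left fun hc => lt_asymm hzx (hc _ hx _ hz)
    refine ⟨⟨c1, c2, c3⟩, by_contra fun hxl => ?_, by_contra fun hzf => ?_⟩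
    · exact lt_asymm hzx (c2 _ hx hxl _ hz)
    · exact lt_asymm hzx (c3 _ hz hzf _ hx)
  refine .of_between fun x y z hs hzx => ?_
  rcases sublist_append_of_length_three hs with hs | ⟨hxy, hz⟩ | ⟨hx, hyz⟩ | hs
  · exact hA.between hndA hs hzx
  · obtain ⟨⟨c1, -, -⟩, hxl, hzf⟩ := cross (hxy.subset (by simp)) hz hzx
    obtain ⟨hyx, hyl⟩ := lt_of_sublist_of_mem_lastLayer hndA hxy hxl
    exact ⟨c1 y hyl z hzf, hyx⟩
  · obtain ⟨⟨c1, -, -⟩, hxl, hzf⟩ := cross hx (hyz.subset (by simp)) hzx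
    obtain ⟨hzy, hyf⟩ := lt_of_sublist_of_mem_firstLayer hndB hyz hzf
    exact ⟨hzy, c1 x hxl y hyf⟩
  · exact hB.between hndB hs hzx

theorem Avoids231And312.boundary_lt {A B : List ℕ} {a b x y : ℕ}
    (h : Avoids231And312 (A ++ [a] ++ b :: B)) (hnd : (A ++ [a] ++ b :: B).Nodup)
    (hx : x ∈ A ++ [a]) (hy : y ∈ b :: B) (hyx : y < x) : b < a := by
  obtain ⟨y, hy, hya⟩ : ∃ y ∈ b :: B, y < a := by
    rcases mem_append.1 hx with hx | hx
    · exact ⟨y, hy, (h.between hnd (((singleton_sublist.2 hx).append (Sublist.refl [a])).append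
        (singleton_sublist.2 hy)) hyx).1⟩
    · exact ⟨y, hy, mem_singleton.1 hx ▸ hyx⟩
  rcases mem_cons.1 hy with rfl | hy
  · exact hya
  · exact (h.between hnd ((singleton_sublist.2 (by simp)).append
      (cons_sublist_cons.2 (singleton_sublist.2 hy))) hya).2

theorem Avoids231And312.layersMerge {A B : List ℕ} {a b x y : ℕ}
    (h : Avoids231And312 (A ++ [a] ++ b :: B)) (hnd : (A ++ [a] ++ b :: B).Nodup)
    (hx : x ∈ A ++ [a]) (hy : y ∈ b :: B) (hyx : y < x) :
    LayersMerge (A ++ [a]) (b :: B) := by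
  have hA := h.sublist (sublist_append_left _ _)
  have hB := h.sublist (sublist_append_right _ _)
  have hndA := hnd.sublist (sublist_append_left _ _)
  have hndB := hnd.sublist (sublist_append_right _ _)
  have hne : ∀ u ∈ A ++ [a], ∀ v ∈ b :: B, u ≠ v := fun u hu v hv huv =>
    disjoint_of_nodup_append hnd hu (huv ▸ hv)
  have last_sub : ∀ u ∈ A, [u, a] <+ A ++ [a] := fun u hu =>
    (singleton_sublist.2 hu).append (Sublist.refl [a])
  have first_sub : ∀ v ∈ B, [b, v] <+ b :: B := fun v hv =>
    cons_sublist_cons.2 (singleton_sublist.2 hv)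
  have hba := h.boundary_lt hnd hx hy hyx
  refine ⟨fun x hx y hy => ?_, fun x hx hxl y hy => ?_, fun y hy hyf x hx => ?_⟩
  · have := le_of_mem_lastLayer hx
    have := le_of_mem_firstLayer hy
    omega
  · rw [hA.mem_lastLayer_iff hndA, not_and, not_le] at hxl
    have hxA : x ∈ A := (mem_append.1 hx).resolve_right (by simpa using (hxl hx).ne)
    have hxb : ¬b < x := fun hbx => lt_asymm (hxl hx)
      (h.between hnd ((last_sub x hxA).append (singleton_sublist.2 (by simp))) hbx).2
    refine (Ne.lt_or_gt (hne x hx y hy)).resolve_right fun hyx => ?_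
    rcases mem_cons.1 hy with rfl | hy
    · exact hxb hyx
    · exact hxb (h.between hnd ((singleton_sublist.2 hx).append (first_sub y hy)) hyx).2
  · rw [hB.mem_firstLayer_iff hndB, not_and, not_le] at hyf
    have hyB : y ∈ B := (mem_cons.1 hy).resolve_left (hyf hy).ne'
    have hya : ¬y < a := fun hya => lt_asymm (hyf hy)
      (h.between hnd ((singleton_sublist.2 (by simp)).append (first_sub y hyB)) hya).1
    refine (Ne.lt_or_gt (hne x hx y hy)).resolve_right fun hyx => ?_
    rcases mem_append.1 hx with hx | hx
    · exact hya (h.between hnd ((last_sub x hx).append (singleton_sublist.2 hy)) hyx).1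
    · exact hya (mem_singleton.1 hx ▸ hyx)

theorem avoids231And312_append_iff {A B : List ℕ} (hA : A ≠ []) (hB : B ≠ [])
    (hnd : (A ++ B).Nodup) :
    Avoids231And312 (A ++ B) ↔ Avoids231And312 A ∧ Avoids231And312 B ∧
      ((∀ x ∈ A, ∀ y ∈ B, x < y) ∨ LayersMerge A B) := by
  refine ⟨fun h => ⟨h.sublist (sublist_append_left A B), h.sublist (sublist_append_right A B),
    ?_⟩, fun ⟨hA', hB', hc⟩ => hA'.append hB' hnd hc⟩
  by_cases hc : ∀ x ∈ A, ∀ y ∈ B, x < y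
  · exact .inl hc
  push Not at hc
  obtain ⟨x, hx, y, hy, hyx⟩ := hc
  have hyx : y < x := hyx.lt_of_ne fun e => disjoint_of_nodup_append hnd hx (e ▸ hy)
  obtain ⟨A, a, rfl⟩ : ∃ A' a, A = A' ++ [a] :=
    ⟨A.dropLast, A.getLast hA, (dropLast_append_getLast hA).symm⟩
  obtain ⟨b, B, rfl⟩ := exists_cons_of_ne_nil hB
  exact .inr (h.layersMerge hnd hx hy hyx)

/-- let `p = L n R` be a permutation of length `n` (so `n` is its
maximum entry) with `L, R` nonempty. Then `s(p) = s(L) s(R) n`, and `s(p)` avoids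
both `231` and `312` if and only if `s(L)` and `s(R)` both avoid `231` and `312`
(so each is layered) and either (1) every entry of `L` is less than every entry of
`R`, or (2) every entry of the last layer of `s(L)` is greater than every entry of
the first layer of `s(R)`, every entry of `L` not in the last layer of `s(L)` is
less than every entry of `R`, and every entry of `R` not in the first layer of
`s(R)` is greater than every entry of `L`. -/
theorem av231_312_split (n : ℕ) (L R : List ℕ) (hL : L ≠ []) (hR : R ≠ [])
    (hp : IsPermList n (L ++ n :: R)) :
    stackSort (L ++ n :: R) = stackSort L ++ stackSort R ++ [n] ∧
    ((AvoidsPat (stackSort (L ++ n :: R)) [2, 3, 1] ∧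
        AvoidsPat (stackSort (L ++ n :: R)) [3, 1, 2]) ↔
      ((AvoidsPat (stackSort L) [2, 3, 1] ∧ AvoidsPat (stackSort L) [3, 1, 2]) ∧
       (AvoidsPat (stackSort R) [2, 3, 1] ∧ AvoidsPat (stackSort R) [3, 1, 2]) ∧
       ((∀ x ∈ L, ∀ y ∈ R, x < y) ∨
        ((∀ x ∈ lastLayer (stackSort L), ∀ y ∈ firstLayer (stackSort R), y < x) ∧
         (∀ x ∈ L, x ∉ lastLayer (stackSort L) → ∀ y ∈ R, x < y) ∧
         (∀ y ∈ R, y ∉ firstLayer (stackSort R) → ∀ x ∈ L, x < y))))) := by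
  have hnd : (L ++ n :: R).Nodup := hp.nodup_iff.2 (nodup_range.map (add_left_injective 1))
  have hle : ∀ x ∈ L ++ n :: R, x ≤ n := fun x hx => by
    obtain ⟨a, ha, rfl⟩ := mem_map.1 (hp.subset hx)
    exact mem_range.1 ha
  have hlt : ∀ x ∈ L ++ R, x < n := fun x hx =>
    (hle x (mem_append.2 ((mem_append.1 hx).imp_right (mem_cons_of_mem n)))).lt_of_ne fun e =>
      (nodup_cons.1 (nodup_middle.1 hnd)).1 (e ▸ hx)
  have hsplit : stackSort (L ++ n :: R) = stackSort L ++ stackSort R ++ [n] :=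
    stackSort_append_cons (fun x hx => hlt x (by simp [hx])) fun x hx => hle x (by simp [hx])
  have hpL := stackSort_perm L
  have hpR := stackSort_perm R
  have hndLR : (stackSort L ++ stackSort R).Nodup :=
    (hpL.append hpR).nodup_iff.2 ((nodup_middle.1 hnd).of_cons)
  refine ⟨hsplit, ?_⟩
  rw [hsplit, avoidsPat_231_and_312_iff, avoidsPat_231_and_312_iff, avoidsPat_231_and_312_iff,
    avoids231And312_append_singleton_iff fun x hx => hlt x ((hpL.append hpR).subset hx),
    avoids231And312_append_iff (fun h => hL (by simpa [h] using hpL.symm))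
      (fun h => hR (by simpa [h] using hpR.symm)) hndLR]
  simp only [LayersMerge, hpL.mem_iff, hpR.mem_iff]
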